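/- Let b be an element of a free group with |b| even, and suppose b = p·q⁻¹ as a reduced product (no cancellation, so |b| = |p| + |q|) with |p| = |q| = |b|/2. If p ≠ q and ‖p‖ < ‖q‖, and x ∈ F satisfies |q| ≤ |x| with qx reduced (|qx| = |q| + |x|), then replacing the pair (qx, x⁻¹q⁻¹) by (px, x⁻¹p⁻¹) strictly decreases the sum of energies: ‖px‖ + ‖x⁻¹p⁻¹‖ < ‖qx‖ + ‖x⁻¹q⁻¹‖. -/

import Mathlib

/-!
The energy of a reduced word of length `n` is a base-`(4g+1)` numeral with `n` nonzero digits,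
the first letter being the most significant, so it lies in `[(4g+1)^(n-1), (4g+1)^n)`.
If `px` is reduced, so is `x⁻¹p⁻¹`: the slide lowers the leading `|p|` digits of `qx`
(as `‖p‖ < ‖q‖`) and changes only the trailing `|p| ≤ |x|` digits of `x⁻¹q⁻¹`, by less than one
unit of the leading block of `qx`. Otherwise `px` and `x⁻¹p⁻¹` are at least two letters shorter
than `qx`, and already their total energy is below that of `qx`.
-/

/-- The index (in `{1, …, 4g}`) of a letter of the free group of rank `2g`. -/
def letterIndex (g : ℕ) (x : Fin (2 * g) × Bool) : ℕ :=
  if x.2 then x.1.val + 1 else 2 * g + x.1.val + 1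

/-- The energy of `w`: writing the reduced word of `w` as `σ_{j₁} ⋯ σ_{j_k}`, the
energy is `Σᵢ (4g+1)^(i-1) · jᵢ`, interpreting the letter indices as digits in
base `4g+1` (the later letters of the word are the less significant digits). -/
def energy (g : ℕ) (w : FreeGroup (Fin (2 * g))) : ℕ :=
  (((FreeGroup.toWord w).reverse.zipIdx).map
    (fun p => (4 * g + 1) ^ p.2 * letterIndex g p.1)).sum

namespace FreeGroup

variable {α : Type*} [DecidableEq α]

theorem toWord_mul_of_norm_mul_eq {u v : FreeGroup α}
    (h : norm (u * v) = norm u + norm v) : (u * v).toWord = u.toWord ++ v.toWord :=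
  (toWord_mul_sublist u v).eq_of_length (by simpa [norm] using h)

theorem norm_inv_mul_inv_eq {u v : FreeGroup α} (h : norm (u * v) = norm u + norm v) :
    norm (v⁻¹ * u⁻¹) = norm v⁻¹ + norm u⁻¹ := by
  rw [← mul_inv_rev, norm_inv_eq, norm_inv_eq, norm_inv_eq, h, add_comm]

/-- Free reduction deletes letters in cancelling pairs. -/
theorem norm_mul_add_two_le_of_ne {u v : FreeGroup α}
    (h : norm (u * v) ≠ norm u + norm v) : norm (u * v) + 2 ≤ norm u + norm v := by
  obtain ⟨n, hn⟩ := Red.length (reduce.red (L := u.toWord ++ v.toWord))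
  rw [← toWord_mul, List.length_append] at hn
  simp only [norm] at h ⊢
  omega

end FreeGroup

section WordEnergy

variable {g : ℕ}

theorem one_le_letterIndex (a : Fin (2 * g) × Bool) : 1 ≤ letterIndex g a := by
  unfold letterIndex; split <;> omega

theorem letterIndex_le (a : Fin (2 * g) × Bool) : letterIndex g a ≤ 4 * g := by
  have := a.1.isLt
  unfold letterIndex; split <;> omega

variable (g) in
def wordEnergy (l : List (Fin (2 * g) × Bool)) : ℕ :=
  ((l.reverse.zipIdx).map (fun p => (4 * g + 1) ^ p.2 * letterIndex g p.1)).sum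

theorem energy_eq_wordEnergy (w : FreeGroup (Fin (2 * g))) :
    energy g w = wordEnergy g w.toWord := rfl

@[simp]
theorem wordEnergy_nil : wordEnergy g [] = 0 := rfl

theorem wordEnergy_cons (a : Fin (2 * g) × Bool) (l : List (Fin (2 * g) × Bool)) :
    wordEnergy g (a :: l) = wordEnergy g l + (4 * g + 1) ^ l.length * letterIndex g a := by
  simp [wordEnergy, List.zipIdx_append]

theorem wordEnergy_append (u v : List (Fin (2 * g) × Bool)) :
    wordEnergy g (u ++ v) = wordEnergy g u * (4 * g + 1) ^ v.length + wordEnergy g v := by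
  induction u with
  | nil => simp
  | cons a u ih =>
    rw [List.cons_append, wordEnergy_cons, wordEnergy_cons, ih, List.length_append, pow_add]
    ring

theorem wordEnergy_lt_pow_length (l : List (Fin (2 * g) × Bool)) :
    wordEnergy g l < (4 * g + 1) ^ l.length := by
  induction l with
  | nil => simp
  | cons a l ih =>
    rw [wordEnergy_cons, List.length_cons, pow_succ]
    nlinarith [letterIndex_le a]

theorem pow_length_le_wordEnergy_cons (a : Fin (2 * g) × Bool) (l : List (Fin (2 * g) × Bool)) :
    (4 * g + 1) ^ l.length ≤ wordEnergy g (a :: l) := by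
  rw [wordEnergy_cons]
  have := Nat.le_mul_of_pos_right ((4 * g + 1) ^ l.length) (one_le_letterIndex a)
  omega

end WordEnergy

section Energy

open FreeGroup

variable {g : ℕ}

theorem pos_of_energy_lt {u v : FreeGroup (Fin (2 * g))} (h : energy g u < energy g v) :
    0 < g := by
  refine Nat.pos_of_ne_zero fun hg => ?_
  subst hg
  have : IsEmpty (Fin (2 * 0)) := Fin.isEmpty'
  exact h.ne (congrArg (energy 0) (Subsingleton.elim u v))

theorem energy_lt_pow_norm (w : FreeGroup (Fin (2 * g))) : energy g w < (4 * g + 1) ^ norm w :=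
  wordEnergy_lt_pow_length _

theorem pow_norm_sub_one_le_energy {w : FreeGroup (Fin (2 * g))} (hw : w ≠ 1) :
    (4 * g + 1) ^ (norm w - 1) ≤ energy g w := by
  rw [energy_eq_wordEnergy, FreeGroup.norm]
  obtain ⟨a, l, hl⟩ := List.exists_cons_of_ne_nil (mt toWord_eq_nil_iff.1 hw)
  rw [hl]
  exact pow_length_le_wordEnergy_cons a l

theorem energy_mul_of_norm_mul_eq {u v : FreeGroup (Fin (2 * g))}
    (h : norm (u * v) = norm u + norm v) :
    energy g (u * v) = energy g u * (4 * g + 1) ^ norm v + energy g v := by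
  rw [energy_eq_wordEnergy, toWord_mul_of_norm_mul_eq h, wordEnergy_append]
  rfl

theorem energy_add_energy_lt_of_norm_add_two_le (hg : 0 < g) {u v w : FreeGroup (Fin (2 * g))}
    (hu : norm u + 2 ≤ norm w) (hv : norm v + 2 ≤ norm w) :
    energy g u + energy g v < energy g w := by
  obtain ⟨k, hk⟩ : ∃ k, norm w = k + 2 := ⟨norm w - 2, by omega⟩
  have hw : w ≠ 1 := fun h => by simp [h] at hk
  have hu' : energy g u < (4 * g + 1) ^ k :=
    (energy_lt_pow_norm u).trans_le (Nat.pow_le_pow_right (by omega) (by omega))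
  have hv' : energy g v < (4 * g + 1) ^ k :=
    (energy_lt_pow_norm v).trans_le (Nat.pow_le_pow_right (by omega) (by omega))
  have hw' := pow_norm_sub_one_le_energy (g := g) hw
  rw [hk, show k + 2 - 1 = k + 1 by omega, pow_succ] at hw'
  nlinarith [Nat.one_le_pow k (4 * g + 1) (by omega)]

theorem energy_slide_lt_of_norm_mul_eq {p q x : FreeGroup (Fin (2 * g))}
    (hlen : norm p = norm q) (hpq : energy g p < energy g q) (hpx_norm : norm p ≤ norm x)
    (hpx : norm (p * x) = norm p + norm x) (hqx : norm (q * x) = norm q + norm x) :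
    energy g (p * x) + energy g (x⁻¹ * p⁻¹) < energy g (q * x) + energy g (x⁻¹ * q⁻¹) := by
  rw [energy_mul_of_norm_mul_eq hpx, energy_mul_of_norm_mul_eq hqx,
    energy_mul_of_norm_mul_eq (norm_inv_mul_inv_eq hpx),
    energy_mul_of_norm_mul_eq (norm_inv_mul_inv_eq hqx), norm_inv_eq, norm_inv_eq, ← hlen]
  have hp_inv : energy g p⁻¹ < (4 * g + 1) ^ norm x := by
    refine (energy_lt_pow_norm _).trans_le (Nat.pow_le_pow_right (by omega) ?_)
    rwa [norm_inv_eq]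
  have hshift : (energy g p + 1) * (4 * g + 1) ^ norm x ≤ energy g q * (4 * g + 1) ^ norm x :=
    Nat.mul_le_mul_right _ hpq
  nlinarith

end Energy

theorem balanced_slide_decreases_energy_general (g : ℕ)
    (p q x : FreeGroup (Fin (2 * g)))
    (hlen : FreeGroup.norm p = FreeGroup.norm q)
    (hpq : energy g p < energy g q)
    (hqx : FreeGroup.norm q ≤ FreeGroup.norm x)
    (hred : FreeGroup.norm (q * x) = FreeGroup.norm q + FreeGroup.norm x) :
    energy g (p * x) + energy g (x⁻¹ * p⁻¹) <
      energy g (q * x) + energy g (x⁻¹ * q⁻¹) := by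
  by_cases hpx : FreeGroup.norm (p * x) = FreeGroup.norm p + FreeGroup.norm x
  · exact energy_slide_lt_of_norm_mul_eq hlen hpq (hlen ▸ hqx) hpx hred
  · have hshort := FreeGroup.norm_mul_add_two_le_of_ne hpx
    have hshort_inv : FreeGroup.norm (x⁻¹ * p⁻¹) = FreeGroup.norm (p * x) := by
      rw [← mul_inv_rev, FreeGroup.norm_inv_eq]
    have := energy_add_energy_lt_of_norm_add_two_le (pos_of_energy_lt hpq)
      (u := p * x) (v := x⁻¹ * p⁻¹) (w := q * x) (by omega) (by omega)
    omega

/-- If a balanced end `b = p * q⁻¹` (a reduced product with `|p| = |q| = |b|/2`)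
satisfies `p ≠ q` and `‖p‖ < ‖q‖`, and `x` satisfies `|q| ≤ |x|` with `q*x`
reduced, then replacing `(q*x, x⁻¹*q⁻¹)` by `(p*x, x⁻¹*p⁻¹)` strictly decreases
the sum of energies. -/
theorem balanced_slide_decreases_energy (g : ℕ)
    (b p q x : FreeGroup (Fin (2 * g)))
    (hb : b = p * q⁻¹)
    (hbred : FreeGroup.norm b = FreeGroup.norm p + FreeGroup.norm q)
    (hlen : FreeGroup.norm p = FreeGroup.norm q)
    (hne : p ≠ q)
    (hpq : energy g p < energy g q)
    (hqx : FreeGroup.norm q ≤ FreeGroup.norm x)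
    (hred : FreeGroup.norm (q * x) = FreeGroup.norm q + FreeGroup.norm x) :
    energy g (p * x) + energy g (x⁻¹ * p⁻¹) <
      energy g (q * x) + energy g (x⁻¹ * q⁻¹) :=
  balanced_slide_decreases_energy_general g p q x hlen hpq hqx hred
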